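/- arXiv:1702.07638 — 4 statements merged into one kernel-verified Lean document; each statement's English description precedes it below -/
import Mathlib

section
/- Assume β := β_L − μ·β_H > 0, f > 0 and e_m > 0. If f·e_m < β/(1+β), then w_H⁽²⁾ > w_H⁽¹⁾; and if f·e_m > β/(1+β), then w_H⁽²⁾ < w_H⁽¹⁾. (Paper's Proposition 1, high-fixed-cost case: with carbon-emission constraint the manufacturer's buy-back price to the high-type retailer exceeds the unconstrained one exactly when the carbon reward-penalty charge f·e_m is below the threshold β/(1+β).) -/
/-! The carbon charge `x = f·e_m` changes the buy-back price by
`(β - x(1 + β)) / (4β) = (1 + β)/(4β) · (β/(1 + β) - x)`, and the factor `(1 + β)/(4β)` is positive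
for `β > 0`; so the sign of `w₂ - w₁` is the sign of `β/(1 + β) - x`. -/

lemma buyback_price_gap_eq (μ A β x : ℝ) (hβ : β ≠ 0) (h1β : 1 + β ≠ 0) :
    ((μ * A - x) / 4 + ((1 - μ)^2 * A + β - x) / (4 * β))
      - (μ * A / 4 + (1 - μ)^2 * A / (4 * β))
      = (1 + β) / (4 * β) * (β / (1 + β) - x) := by
  field_simp
  ring

theorem prop1_high_general
    (a p₁ c c_d βH μ π₀ f e_m A β w₁ w₂ : ℝ)
    (hβpos : β > 0)
    (hw₁ : w₁ = μ * A / 4 + (1 - μ)^2 * A / (4 * β)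
        + 4 * π₀ * βH / ((a - p₁)^2 * A) + c + c_d)
    (hw₂ : w₂ = (μ * A - f * e_m) / 4 + ((1 - μ)^2 * A + β - f * e_m) / (4 * β)
        + 4 * π₀ * βH / ((a - p₁)^2 * A) + c + c_d) :
    (f * e_m < β / (1 + β) → w₂ > w₁) ∧ (f * e_m > β / (1 + β) → w₂ < w₁) := by
  have hgap : w₂ - w₁ = (1 + β) / (4 * β) * (β / (1 + β) - f * e_m) := by
    rw [hw₁, hw₂, ← buyback_price_gap_eq μ A β (f * e_m) hβpos.ne' (by positivity)]
    ring
  have hscale : 0 < (1 + β) / (4 * β) := by positivity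
  constructor
  · intro h
    linarith [mul_pos hscale (sub_pos.2 h)]
  · intro h
    linarith [mul_neg_of_pos_of_neg hscale (sub_neg.2 h)]

/-- Paper's Proposition 1, high-fixed-cost case. -/
theorem prop1_high
    (a p₁ p_m c c_d c_r c_m βH βL μ π₀ f e_m A β w₁ w₂ : ℝ)
    (hA : A = p_m + c_m - c_r - c - c_d)
    (hβ : β = βL - μ * βH)
    (hβpos : β > 0) (hf : f > 0) (he : e_m > 0)
    (hw₁ : w₁ = μ * A / 4 + (1 - μ)^2 * A / (4 * β)
        + 4 * π₀ * βH / ((a - p₁)^2 * A) + c + c_d)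
    (hw₂ : w₂ = (μ * A - f * e_m) / 4 + ((1 - μ)^2 * A + β - f * e_m) / (4 * β)
        + 4 * π₀ * βH / ((a - p₁)^2 * A) + c + c_d) :
    (f * e_m < β / (1 + β) → w₂ > w₁) ∧ (f * e_m > β / (1 + β) → w₂ < w₁) :=
  prop1_high_general a p₁ c c_d βH μ π₀ f e_m A β w₁ w₂ hβpos hw₁ hw₂
end

section
/- Assume f > 0, β_L > 0 and D < 0, i.e. β_H·(4β_L − c² − β_L² + μ·β_L) < β_L·μ·(c² − β_H²). If e_m < e_0/β_L, then w_H⁽⁴⁾ > w_H⁽³⁾; and if e_m > e_0/β_L, then w_H⁽⁴⁾ < w_H⁽³⁾. (Paper's Proposition 3, high-fixed-cost case: with the carbon reward-penalty mechanism the buy-back price to the high-type retailer exceeds the one without it exactly when the manufacturer's unit carbon emission e_m is below e_0/β_L.) -/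
/-- Paper's Proposition 3, high-fixed-cost case. -/
theorem prop3_high
    (a p_m c βH βL μ ε f e_m e_0 D N w₃ w₄ : ℝ)
    (hD : D = 2 * βH * (4 * βL - c^2 - βL^2 + βL * μ) - 2 * βL * μ * (c^2 - βH^2))
    (hN : N = 2*a + 2*c - 2*p_m + a*ε - c*ε*p_m - c*ε^2*p_m + ε^2*p_m - a*c*ε - 2*a*c)
    (hf : f > 0) (hβL : βL > 0)
    (hDneg : βH * (4 * βL - c^2 - βL^2 + μ * βL) < βL * μ * (c^2 - βH^2))
    (hw₃ : w₃ = βL * N / D)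
    (hw₄ : w₄ = (βL * (N + f * e_m) - f * e_0) / D) :
    (e_m < e_0 / βL → w₄ > w₃) ∧ (e_m > e_0 / βL → w₄ < w₃) := by
  have hD0 : D < 0 := by rw [hD]; nlinarith
  constructor
  · intro h
    rw [lt_div_iff₀ hβL] at h
    rw [hw₃, hw₄, gt_iff_lt, div_lt_div_right_of_neg hD0]
    nlinarith
  · intro h
    rw [gt_iff_lt, div_lt_iff₀ hβL] at h
    rw [hw₃, hw₄, div_lt_div_right_of_neg hD0]
    nlinarith
end

section
/- Assume B := c_m + c_r + c_d − c > 0, A' := p_m + c_m + c_r + c_d − c ≠ 0, f > 0 and e_0 > 0. Then p₁⁽⁵⁾ < p₁⁽⁴⁾ if and only if k > (2 − A'²)·f·e_0/B. (Paper's Proposition 8, retailer one: retailer one's selling price under the combined carbon and recycling reward-penalty mechanism is lower than under the carbon mechanism alone exactly when the unit recycling reward-penalty rate k exceeds the threshold (2 − A'²)·f·e_0/(c_m + c_r + c_d − c).) -/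
/-- Paper's Proposition 8, retailer one. -/
theorem prop8_retailer_one
    (p_m c c_d c_r c_m f e_0 k p₄ p₅ A' B : ℝ)
    (hA' : A' = p_m + c_m + c_r + c_d - c)
    (hB : B = c_m + c_r + c_d - c)
    (hBpos : B > 0) (hA'ne : A' ≠ 0) (hf : f > 0) (he0 : e_0 > 0)
    (hp₅ : p₅ = p₄ - f * e_0 + (2 * f * e_0 - B * k) / A'^2) :
    p₅ < p₄ ↔ k > (2 - A'^2) * f * e_0 / B := by
  have hA2 : (0:ℝ) < A'^2 := by positivity
  subst hp₅
  rw [gt_iff_lt, div_lt_iff₀ hBpos]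
  constructor
  · intro h
    have h1 : (2 * f * e_0 - B * k) / A'^2 < f * e_0 := by linarith
    have h2 : 2 * f * e_0 - B * k < f * e_0 * A'^2 := by
      rwa [div_lt_iff₀ hA2] at h1
    nlinarith
  · intro h
    have h2 : 2 * f * e_0 - B * k < f * e_0 * A'^2 := by nlinarith
    have h1 : (2 * f * e_0 - B * k) / A'^2 < f * e_0 := by
      rwa [div_lt_iff₀ hA2]
    linarith
end

section
/- Assume B := c_m + c_r + c_d − c > 0, A' := p_m + c_m + c_r + c_d − c ≠ 0, β_H > 0 and a > ε. Then p₂⁽⁵⁾ < p₂⁽⁴⁾ if and only if k > 3f·e_0/B − f·e_0·A'²/(B·β_H·(a−ε)) + ε. (Paper's Proposition 8, retailer two: retailer two's selling price under the combined carbon and recycling reward-penalty mechanism is lower than under the carbon mechanism alone exactly when the unit recycling reward-penalty rate k exceeds the threshold 3f·e_0/(c_m + c_r + c_d − c) − f·e_0·A'²/(β_H·(a−ε)·(c_m + c_r + c_d − c)) + ε.) -/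
theorem sub_add_lt_self_iff {α : Type*} [AddCommGroup α] [PartialOrder α]
    [IsOrderedAddMonoid α] (p x y : α) : p - x + y < p ↔ y < x := by
  rw [sub_add_eq_add_sub, sub_lt_iff_lt_add, add_lt_add_iff_left]

theorem sub_mul_div_lt_div_iff {K : Type*} [Field K] [LinearOrder K] [IsStrictOrderedRing K]
    {A B D C F t : K} (hA : 0 < A) (hB : 0 < B) (hD : 0 < D) :
    (C - B * t) / A < F / D ↔ C / B - F * A / (B * D) < t := by
  have hBD : 0 < B * D := mul_pos hB hD
  have hcommon : C / B - F * A / (B * D) = (C * D - F * A) / (B * D) := by field_simp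
  rw [div_lt_div_iff₀ hA hD, hcommon, div_lt_iff₀ hBD]
  constructor <;> intro h <;> linarith

theorem prop8_retailer_two_general
    (a βH ε f e_0 k p₄ p₅ A' B : ℝ)
    (hBpos : B > 0) (hA'ne : A' ≠ 0) (hβH : βH > 0) (ha : a > ε)
    (hp₅ : p₅ = p₄ - f * e_0 / (βH * (a - ε)) + (3 * f * e_0 - B * (k - ε)) / A'^2) :
    p₅ < p₄ ↔ k > 3 * f * e_0 / B - f * e_0 * A'^2 / (B * βH * (a - ε)) + ε := by
  have hD : 0 < βH * (a - ε) := mul_pos hβH (sub_pos.mpr ha)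
  rw [hp₅, sub_add_lt_self_iff, sub_mul_div_lt_div_iff (by positivity) hBpos hD, mul_assoc B,
    gt_iff_lt, lt_sub_iff_add_lt]

/-- Paper's Proposition 8, retailer two. -/
theorem prop8_retailer_two
    (a p_m c c_d c_r c_m βH ε f e_0 k p₄ p₅ A' B : ℝ)
    (hA' : A' = p_m + c_m + c_r + c_d - c)
    (hB : B = c_m + c_r + c_d - c)
    (hBpos : B > 0) (hA'ne : A' ≠ 0) (hβH : βH > 0) (ha : a > ε)
    (hp₅ : p₅ = p₄ - f * e_0 / (βH * (a - ε)) + (3 * f * e_0 - B * (k - ε)) / A'^2) :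
    p₅ < p₄ ↔ k > 3 * f * e_0 / B - f * e_0 * A'^2 / (B * βH * (a - ε)) + ε :=
  prop8_retailer_two_general a βH ε f e_0 k p₄ p₅ A' B hBpos hA'ne hβH ha hp₅
end
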